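/- arXiv:1811.05555 — 3 statements merged into one kernel-verified Lean document; each statement's English description precedes it below -/
import Mathlib

section
/- Let g : ℝ → ℝ be a bounded Lebesgue-measurable function and let M ⊆ ℝ be a set with nonempty interior. If ∫_ℝ g(t) φ(t − m) dt = 0 for every m ∈ M, where φ(t) = (2π)^{-1/2} exp(−t²/2) is the standard normal density, then g = 0 Lebesgue-almost everywhere. -/
open MeasureTheory

/-- The standard normal density `φ(t) = (2π)^{-1/2} exp(-t²/2)`. -/
noncomputable def stdNormalPDF (t : ℝ) : ℝ :=
  (Real.sqrt (2 * Real.pi))⁻¹ * Real.exp (-t ^ 2 / 2)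

/-!
Since `φ(t - m) = e^{-m²/2} e^{mt} φ(t)`, the hypothesis says that the moment generating
functions of the finite measures `g⁺ φ dt` and `g⁻ φ dt` agree on `M`. Both are finite for every
real argument, so their complex extensions are entire; agreeing on a set with an accumulation
point, they agree everywhere, in particular on the imaginary axis, where they are characteristic
functions. Hence the two measures coincide, so `g⁺ = g⁻` almost everywhere, i.e. `g = 0`.
-/

open Set Filter Topology ProbabilityTheory Real
open scoped NNReal ENNReal

lemma Complex.tendsto_ofReal_nhdsNE (x : ℝ) :
    Tendsto ((↑) : ℝ → ℂ) (𝓝[≠] x) (𝓝[≠] (x : ℂ)) :=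
  Complex.continuous_ofReal.continuousWithinAt.tendsto_nhdsWithin
    fun _ hy h ↦ hy (Complex.ofReal_injective h)

lemma MeasureTheory.Measure.ext_of_mgf_eqOn {μ ν : Measure ℝ} [IsFiniteMeasure μ]
    [IsFiniteMeasure ν] (hμ : integrableExpSet id μ = univ) (hν : integrableExpSet id ν = univ)
    {M : Set ℝ} (hM : (interior M).Nonempty) (h : EqOn (mgf id μ) (mgf id ν) M) : μ = ν := by
  have hμa : AnalyticOnNhd ℂ (complexMGF id μ) univ := by
    simpa [hμ] using analyticOnNhd_complexMGF (X := id) (μ := μ)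
  have hνa : AnalyticOnNhd ℂ (complexMGF id ν) univ := by
    simpa [hν] using analyticOnNhd_complexMGF (X := id) (μ := ν)
  obtain ⟨x, hx⟩ := hM
  have h_real : ∀ᶠ y : ℝ in 𝓝[≠] x, complexMGF id μ y = complexMGF id ν y := by
    have hM_nhds : ∀ᶠ y in 𝓝 x, y ∈ M := mem_interior_iff_mem_nhds.1 hx
    exact eventually_nhdsWithin_of_eventually_nhds <|
      hM_nhds.mono fun y hy ↦ by simp [complexMGF_ofReal, h hy]
  refine Measure.ext_of_complexMGF_id_eq <| funext fun z ↦
    hμa.eqOn_of_preconnected_of_frequently_eq hνa isPreconnected_univ (mem_univ (x : ℂ))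
      ((Complex.tendsto_ofReal_nhdsNE x).frequently h_real.frequently) (mem_univ z)

section ExpMomentDensity

variable {ν : Measure ℝ} {f : ℝ → ℝ≥0}

lemma mgf_id_withDensity (hf : AEMeasurable f ν) (t : ℝ) :
    mgf id (ν.withDensity fun x ↦ f x) t = ∫ x, f x * exp (t * x) ∂ν :=
  integral_withDensity_eq_integral_smul₀ hf _

lemma integrableExpSet_id_withDensity (hf : AEMeasurable f ν)
    (hfi : ∀ t, Integrable (fun x ↦ f x * exp (t * x)) ν) :
    integrableExpSet id (ν.withDensity fun x ↦ f x) = univ :=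
  eq_univ_of_forall fun t ↦ (integrable_withDensity_iff_integrable_smul₀ hf).2 (hfi t)

lemma lintegral_ne_top_of_integrable_mul_exp
    (hfi : ∀ t, Integrable (fun x ↦ f x * exp (t * x)) ν) : ∫⁻ x, f x ∂ν ≠ ∞ := by
  simpa [HasFiniteIntegral] using ((hfi 0).hasFiniteIntegral).ne

end ExpMomentDensity

lemma integrable_toNNReal_mul_exp {ν : Measure ℝ} {g : ℝ → ℝ} {t : ℝ}
    (hg : Integrable (fun x ↦ g x * exp (t * x)) ν) :
    Integrable (fun x ↦ ((g x).toNNReal : ℝ) * exp (t * x)) ν := by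
  refine hg.pos_part.congr (ae_of_all _ fun x ↦ ?_)
  simp only [Real.coe_toNNReal', max_mul_of_nonneg _ _ (exp_pos _).le, zero_mul]

theorem MeasureTheory.ae_eq_zero_of_integral_mul_exp_eq_zero {ν : Measure ℝ} {g : ℝ → ℝ}
    (hg : ∀ t, Integrable (fun x ↦ g x * exp (t * x)) ν) {M : Set ℝ}
    (hM : (interior M).Nonempty) (h : ∀ m ∈ M, ∫ x, g x * exp (m * x) ∂ν = 0) :
    g =ᵐ[ν] 0 := by
  have hg_meas : AEMeasurable g ν := by simpa using (hg 0).aemeasurable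
  have hpos := fun t ↦ integrable_toNNReal_mul_exp (hg t)
  have hneg := fun t ↦ integrable_toNNReal_mul_exp (g := fun x ↦ -g x) (by simpa using (hg t).neg)
  have hpos_meas : AEMeasurable (fun x ↦ (g x).toNNReal) ν := hg_meas.real_toNNReal
  have hneg_meas : AEMeasurable (fun x ↦ (-g x).toNNReal) ν := hg_meas.neg.real_toNNReal
  have : IsFiniteMeasure (ν.withDensity fun x ↦ (g x).toNNReal) :=
    isFiniteMeasure_withDensity (lintegral_ne_top_of_integrable_mul_exp hpos)
  have : IsFiniteMeasure (ν.withDensity fun x ↦ (-g x).toNNReal) :=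
    isFiniteMeasure_withDensity (lintegral_ne_top_of_integrable_mul_exp hneg)
  have h_eq : (ν.withDensity fun x ↦ (g x).toNNReal) = ν.withDensity fun x ↦ (-g x).toNNReal := by
    refine Measure.ext_of_mgf_eqOn (integrableExpSet_id_withDensity hpos_meas hpos)
      (integrableExpSet_id_withDensity hneg_meas hneg) hM fun m hm ↦ ?_
    rw [mgf_id_withDensity hpos_meas, mgf_id_withDensity hneg_meas, ← sub_eq_zero,
      ← integral_sub (hpos m) (hneg m), ← h m hm]
    congr with x
    simp only [Real.coe_toNNReal', ← sub_mul, max_zero_sub_max_neg_zero_eq_self]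
  rw [withDensity_eq_iff hpos_meas.coe_nnreal_ennreal hneg_meas.coe_nnreal_ennreal
    (lintegral_ne_top_of_integrable_mul_exp hpos)] at h_eq
  filter_upwards [h_eq] with x hx
  have hx' : ((g x).toNNReal : ℝ) = (-g x).toNNReal := congrArg _ (ENNReal.coe_inj.1 hx)
  rw [Real.coe_toNNReal', Real.coe_toNNReal'] at hx'
  rw [Pi.zero_apply, ← max_zero_sub_max_neg_zero_eq_self (g x), hx', sub_self]

lemma gaussianPDFReal_zero_one_mul_exp_mul (m x : ℝ) :
    gaussianPDFReal 0 1 x * exp (m * x) = exp (m ^ 2 / 2) * stdNormalPDF (x - m) := by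
  rw [gaussianPDFReal, stdNormalPDF, mul_assoc, ← exp_add, mul_left_comm, ← exp_add]
  congr 2
  · simp
  · push_cast; ring

/-- bounded completeness of the Gaussian location family.
If a bounded measurable `g` integrates to zero against every normal density
`φ(· − m)` with `m` ranging over a set with nonempty interior, then `g = 0`
Lebesgue-almost everywhere. -/
theorem gaussian_location_bounded_complete
    (g : ℝ → ℝ) (hgm : Measurable g) (hgb : ∃ C : ℝ, ∀ t, |g t| ≤ C)
    (M : Set ℝ) (hM : (interior M).Nonempty)
    (hzero : ∀ m ∈ M, ∫ t : ℝ, g t * stdNormalPDF (t - m) = 0) :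
    ∀ᵐ t : ℝ ∂volume, g t = 0 := by
  obtain ⟨C, hC⟩ := hgb
  have h_int (t : ℝ) : Integrable (fun x ↦ g x * exp (t * x)) (gaussianReal 0 1) :=
    (integrable_exp_mul_gaussianReal t).bdd_mul hgm.aestronglyMeasurable
      (ae_of_all _ fun x ↦ by simpa using hC x)
  have h_tilted (m : ℝ) (hm : m ∈ M) : ∫ x, g x * exp (m * x) ∂gaussianReal 0 1 = 0 := by
    simp_rw [integral_gaussianReal_eq_integral_smul one_ne_zero, smul_eq_mul, mul_left_comm _ (g _),
      gaussianPDFReal_zero_one_mul_exp_mul, mul_left_comm (g _), integral_const_mul, hzero m hm,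
      mul_zero]
  exact (gaussianReal_absolutelyContinuous' 0 one_ne_zero).ae_le
    (ae_eq_zero_of_integral_mul_exp_eq_zero h_int hM h_tilted)
end

section
/- Let h : ℝ → ℝ be a bounded Lebesgue-measurable function, z_2 ≠ 0, and β_0, β_1 ∈ ℝ. Then for every z_1 ∈ ℝ: ∫_ℝ h(v) φ(v/z_2 − β_0 − β_1 z_1) dv = ∫_ℝ h(−v) φ(v/z_2 − (−β_0) − (−β_1) z_1) dv, where φ(t) = (2π)^{-1/2} exp(−t²/2) is the standard normal density. Consequently, if the structure (h, β_0, β_1) generates given choice probabilities μ(y|z_1,z_2) = ∫ h(v)φ(v/z_2 − β_0 − β_1 z_1)dv/z_2, then the structure (v ↦ h(−v), −β_0, −β_1) generates the same choice probabilities. -/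
open MeasureTheory

/-- without a sign normalization the signs of `(β₀, β₁)` are not
identified. For every `z₁`, the structure `(h, β₀, β₁)` and the reflected
structure `(v ↦ h (−v), −β₀, −β₁)` generate the same choice probabilities. -/
theorem sign_not_identified
    (h : ℝ → ℝ) (hm : Measurable h) (hb : ∃ C : ℝ, ∀ v, |h v| ≤ C)
    (z₂ : ℝ) (hz₂ : z₂ ≠ 0) (β₀ β₁ : ℝ) :
    (∀ z₁ : ℝ,
      ∫ v : ℝ, h v * stdNormalPDF (v / z₂ - β₀ - β₁ * z₁) =
        ∫ v : ℝ, h (-v) * stdNormalPDF (v / z₂ - (-β₀) - (-β₁) * z₁)) ∧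
    (∀ μ : ℝ → ℝ,
      (∀ z₁ : ℝ,
        μ z₁ = (∫ v : ℝ, h v * stdNormalPDF (v / z₂ - β₀ - β₁ * z₁)) / z₂) →
      ∀ z₁ : ℝ,
        μ z₁ = (∫ v : ℝ, h (-v) * stdNormalPDF (v / z₂ - (-β₀) - (-β₁) * z₁)) / z₂) := by
  have key : ∀ z₁ : ℝ,
      ∫ v : ℝ, h v * stdNormalPDF (v / z₂ - β₀ - β₁ * z₁) =
        ∫ v : ℝ, h (-v) * stdNormalPDF (v / z₂ - (-β₀) - (-β₁) * z₁) := by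
    intro z₁
    rw [← MeasureTheory.integral_neg_eq_self
      (fun v => h (-v) * stdNormalPDF (v / z₂ - (-β₀) - (-β₁) * z₁)) volume]
    congr 1
    funext v
    simp only [stdNormalPDF]
    ring_nf
  refine ⟨key, fun μ hμ z₁ => ?_⟩
  rw [hμ z₁, key z₁]
end

section
/- Let J ≥ 1, let F, G : ℝ^J → ℝ be bounded Lebesgue-measurable functions, let β_0 ∈ ℝ and β_1 ≠ 0, let Z_2 ⊆ ℝ^J and let Z_1 ⊆ ℝ have nonempty interior. Suppose that for every z_1 ∈ Z_1 and z_2 ∈ Z_2: ∫_ℝ F(−z_{2,1} v, …, −z_{2,J} v) φ(v − β_0 − β_1 z_1) dv = ∫_ℝ G(−z_{2,1} v, …, −z_{2,J} v) φ(v − β_0 − β_1 z_1) dv, where φ is the standard normal density. Then for every z_2 ∈ Z_2: F(−z_{2,1} v, …, −z_{2,J} v) = G(−z_{2,1} v, …, −z_{2,J} v) for Lebesgue-almost every v ∈ ℝ. In particular F and G agree almost everywhere along every line ℝ·z_2 with z_2 ∈ Z_2. -/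
open MeasureTheory

/-!
Write `φ` for the standard normal density and `γ` for the standard Gaussian measure. Since
`φ(v - x) = e^{-x²/2} e^{x v} φ(v)`, the hypothesis says that along a ray the difference
`h = F - G` satisfies `∫ e^{x v} h(v) dγ(v) = 0` for all `x` in the open set `β₀ + β₁ Z₁°`.
Splitting `h` into positive and negative parts gives two finite measures `h⁺γ`, `h⁻γ` with all
exponential moments whose moment generating functions agree on that open set. Their complex
moment generating functions are entire, hence equal everywhere by the identity theorem; in
particular the characteristic functions agree, so `h⁺γ = h⁻γ`, i.e. `h = 0` `γ`-a.e., and `γ` has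
the same null sets as Lebesgue measure.
-/

open ProbabilityTheory Filter Topology Real

theorem MeasureTheory.Measure.ext_of_mgf_id_eqOn {μ ν : Measure ℝ} [IsFiniteMeasure μ]
    [IsFiniteMeasure ν] (hμ : ∀ t, Integrable (fun x => rexp (t * x)) μ)
    (hν : ∀ t, Integrable (fun x => rexp (t * x)) ν) {s : Set ℝ} (hs : IsOpen s)
    (hs_ne : s.Nonempty) (h : Set.EqOn (mgf id μ) (mgf id ν) s) : μ = ν := by
  obtain ⟨t, ht⟩ := hs_ne
  have analytic {ρ : Measure ℝ} (hρ : ∀ t, Integrable (fun x => rexp (t * x)) ρ) :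
      AnalyticOnNhd ℂ (complexMGF id ρ) Set.univ := by
    have : integrableExpSet id ρ = Set.univ := Set.eq_univ_of_forall hρ
    simpa [this] using analyticOnNhd_complexMGF (X := id) (μ := ρ)
  have eq_near_t : ∃ᶠ x : ℝ in 𝓝[≠] t, complexMGF id μ x = complexMGF id ν x :=
    (eventually_nhdsWithin_of_eventually_nhds <| (hs.eventually_mem ht).mono
      fun x hx => by rw [complexMGF_ofReal, complexMGF_ofReal, h hx]).frequently
  have ofReal_tendsto : Tendsto (fun x : ℝ => (x : ℂ)) (𝓝[≠] t) (𝓝[≠] (t : ℂ)) :=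
    tendsto_nhdsWithin_iff.2 ⟨Complex.continuous_ofReal.continuousWithinAt.tendsto,
      eventually_nhdsWithin_of_forall fun x hx => by simpa using hx⟩
  refine Measure.ext_of_complexMGF_id_eq (funext fun z => ?_)
  exact (analytic hμ).eqOn_of_preconnected_of_frequently_eq (analytic hν) isPreconnected_univ
    (Set.mem_univ _) (ofReal_tendsto.frequently eq_near_t) (Set.mem_univ z)

section PositivePart

variable {μ : Measure ℝ} {f : ℝ → ℝ}

lemma integrable_exp_mul_max_zero {t : ℝ} (hf : Integrable (fun x => rexp (t * x) * f x) μ) :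
    Integrable (fun x => rexp (t * x) * max (f x) 0) μ := by
  simpa only [mul_max_of_nonneg _ _ (exp_pos _).le, mul_zero] using hf.pos_part

lemma integrable_exp_mul_withDensity_ofReal (hfm : AEMeasurable f μ) {t : ℝ}
    (hf : Integrable (fun x => rexp (t * x) * f x) μ) :
    Integrable (fun x => rexp (t * x)) (μ.withDensity fun x => ENNReal.ofReal (f x)) := by
  rw [integrable_withDensity_iff_integrable_smul₀' hfm.ennreal_ofReal (by simp)]
  simpa only [ENNReal.toReal_ofReal', smul_eq_mul, mul_comm] using
    integrable_exp_mul_max_zero hf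

lemma mgf_id_withDensity_ofReal (hf : AEMeasurable f μ) (t : ℝ) :
    mgf id (μ.withDensity fun x => ENNReal.ofReal (f x)) t =
      ∫ x, rexp (t * x) * max (f x) 0 ∂μ := by
  rw [mgf, integral_withDensity_eq_integral_toReal_smul₀ hf.ennreal_ofReal (by simp)]
  simp only [ENNReal.toReal_ofReal', id, smul_eq_mul, mul_comm]

end PositivePart

theorem ae_eq_zero_of_integral_exp_mul_eq_zero {μ : Measure ℝ} {f : ℝ → ℝ}
    (hf : ∀ t, Integrable (fun x => rexp (t * x) * f x) μ) {s : Set ℝ} (hs : IsOpen s)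
    (hs_ne : s.Nonempty) (h0 : ∀ t ∈ s, ∫ x, rexp (t * x) * f x ∂μ = 0) : f =ᵐ[μ] 0 := by
  have hf_int : Integrable f μ := by simpa using hf 0
  have hfm : AEMeasurable f μ := hf_int.aemeasurable
  have hfm_neg : AEMeasurable (fun x => -f x) μ := hfm.neg
  have hf_neg (t : ℝ) : Integrable (fun x => rexp (t * x) * -f x) μ := by
    simpa using (hf t).neg
  have := isFiniteMeasure_withDensity_ofReal (f := f) hf_int.2
  have := isFiniteMeasure_withDensity_ofReal (f := fun x => -f x) hf_int.neg.2
  have parts_eq : (μ.withDensity fun x => ENNReal.ofReal (f x)) =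
      μ.withDensity fun x => ENNReal.ofReal (-f x) := by
    refine Measure.ext_of_mgf_id_eqOn (fun t => integrable_exp_mul_withDensity_ofReal hfm (hf t))
      (fun t => integrable_exp_mul_withDensity_ofReal hfm_neg (hf_neg t)) hs hs_ne fun t ht => ?_
    rw [mgf_id_withDensity_ofReal hfm, mgf_id_withDensity_ofReal hfm_neg, ← sub_eq_zero, ←
      integral_sub (integrable_exp_mul_max_zero (hf t)) (integrable_exp_mul_max_zero (hf_neg t))]
    simpa only [← mul_sub, max_zero_sub_max_neg_zero_eq_self] using h0 t ht
  rw [withDensity_eq_iff hfm.ennreal_ofReal hfm_neg.ennreal_ofReal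
    hf_int.lintegral_lt_top.ne] at parts_eq
  filter_upwards [parts_eq] with x hx
  rcases le_total (f x) 0 with hx0 | hx0
  · rw [ENNReal.ofReal_of_nonpos hx0, eq_comm, ENNReal.ofReal_eq_zero] at hx
    exact le_antisymm hx0 (neg_nonpos.1 hx)
  · rw [ENNReal.ofReal_of_nonpos (neg_nonpos.2 hx0), ENNReal.ofReal_eq_zero] at hx
    exact le_antisymm hx hx0

lemma stdNormalPDF_sub (x v : ℝ) :
    stdNormalPDF (v - x) = rexp (-x ^ 2 / 2) * (gaussianPDFReal 0 1 v * rexp (x * v)) := by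
  simp only [stdNormalPDF, gaussianPDFReal, NNReal.coe_one, mul_one, sub_zero]
  rw [mul_left_comm, mul_assoc, ← exp_add, ← exp_add]
  congr 2
  ring

lemma integral_mul_stdNormalPDF_sub (f : ℝ → ℝ) (x : ℝ) :
    ∫ v, f v * stdNormalPDF (v - x) =
      rexp (-x ^ 2 / 2) * ∫ v, rexp (x * v) * f v ∂gaussianReal 0 1 := by
  rw [integral_gaussianReal_eq_integral_smul one_ne_zero, ← integral_const_mul]
  congr 1 with v
  rw [stdNormalPDF_sub, smul_eq_mul]
  ring

lemma integrable_exp_mul_gaussianReal_of_bounded {f : ℝ → ℝ} (hf : Measurable f)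
    (hf_bdd : ∃ C, ∀ x, |f x| ≤ C) (t : ℝ) :
    Integrable (fun x => rexp (t * x) * f x) (gaussianReal 0 1) := by
  obtain ⟨C, hC⟩ := hf_bdd
  exact (integrable_exp_mul_gaussianReal t).mul_bdd hf.aestronglyMeasurable
    (Eventually.of_forall hC)

theorem ae_eq_of_integral_mul_stdNormalPDF_sub_eqOn {f g : ℝ → ℝ} (hf : Measurable f)
    (hg : Measurable g) (hf_bdd : ∃ C, ∀ x, |f x| ≤ C) (hg_bdd : ∃ C, ∀ x, |g x| ≤ C)
    {s : Set ℝ} (hs : IsOpen s) (hs_ne : s.Nonempty)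
    (h : ∀ x ∈ s, ∫ v, f v * stdNormalPDF (v - x) = ∫ v, g v * stdNormalPDF (v - x)) :
    f =ᵐ[volume] g := by
  have hf_int := integrable_exp_mul_gaussianReal_of_bounded hf hf_bdd
  have hg_int := integrable_exp_mul_gaussianReal_of_bounded hg hg_bdd
  have hfg : (fun v => f v - g v) =ᵐ[gaussianReal 0 1] 0 := by
    have hfg_int (t : ℝ) : Integrable (fun v => rexp (t * v) * (f v - g v)) (gaussianReal 0 1) := by
      simp only [mul_sub]
      exact (hf_int t).sub (hg_int t)
    refine ae_eq_zero_of_integral_exp_mul_eq_zero hfg_int hs hs_ne fun x hx => ?_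
    have h_tilted := h x hx
    rw [integral_mul_stdNormalPDF_sub, integral_mul_stdNormalPDF_sub,
      mul_right_inj' (exp_ne_zero _)] at h_tilted
    simp only [mul_sub]
    rw [integral_sub (hf_int x) (hg_int x), h_tilted, sub_self]
  filter_upwards [(gaussianReal_absolutelyContinuous' 0 one_ne_zero).ae_le hfg] with v hv
  exact sub_eq_zero.1 hv

theorem multinomial_identification_along_rays_general
    {J : ℕ}
    (F G : (Fin J → ℝ) → ℝ) (hFm : Measurable F) (hGm : Measurable G)
    (hFb : ∃ C : ℝ, ∀ g, |F g| ≤ C) (hGb : ∃ C : ℝ, ∀ g, |G g| ≤ C)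
    (β₀ β₁ : ℝ) (hβ₁ : β₁ ≠ 0)
    (Z₂ : Set (Fin J → ℝ)) (Z₁ : Set ℝ) (hZ₁ : (interior Z₁).Nonempty)
    (heq : ∀ z₁ ∈ Z₁, ∀ z₂ ∈ Z₂,
      ∫ v : ℝ, F (fun j => -z₂ j * v) * stdNormalPDF (v - β₀ - β₁ * z₁) =
        ∫ v : ℝ, G (fun j => -z₂ j * v) * stdNormalPDF (v - β₀ - β₁ * z₁)) :
    ∀ z₂ ∈ Z₂, ∀ᵐ v : ℝ ∂volume,
      F (fun j => -z₂ j * v) = G (fun j => -z₂ j * v) := by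
  intro z₂ hz₂
  obtain ⟨z₀, hz₀⟩ := hZ₁
  have h_ray : Measurable fun v : ℝ => (fun j => -z₂ j * v : Fin J → ℝ) := by fun_prop
  refine ae_eq_of_integral_mul_stdNormalPDF_sub_eqOn (hFm.comp h_ray) (hGm.comp h_ray)
    (hFb.imp fun C hC v => hC _) (hGb.imp fun C hC v => hC _)
    (s := (fun x => (x - β₀) / β₁) ⁻¹' interior Z₁) (isOpen_interior.preimage (by fun_prop))
    ⟨β₀ + β₁ * z₀, by simpa [hβ₁] using hz₀⟩ fun x hx => ?_
  have h_index (v : ℝ) : v - β₀ - β₁ * ((x - β₀) / β₁) = v - x := by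
    field_simp
    ring
  simpa only [h_index] using heq _ (interior_subset hx) z₂ hz₂

/-- core of Proposition 3(ii), multinomial choice: once the
index coefficients are identified, variation in the full-support Gaussian index
identifies the structural function along every ray generated by the product
characteristics `z₂ ∈ Z₂`. -/
theorem multinomial_identification_along_rays
    {J : ℕ} (hJ : 1 ≤ J)
    (F G : (Fin J → ℝ) → ℝ) (hFm : Measurable F) (hGm : Measurable G)
    (hFb : ∃ C : ℝ, ∀ g, |F g| ≤ C) (hGb : ∃ C : ℝ, ∀ g, |G g| ≤ C)
    (β₀ β₁ : ℝ) (hβ₁ : β₁ ≠ 0)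
    (Z₂ : Set (Fin J → ℝ)) (Z₁ : Set ℝ) (hZ₁ : (interior Z₁).Nonempty)
    (heq : ∀ z₁ ∈ Z₁, ∀ z₂ ∈ Z₂,
      ∫ v : ℝ, F (fun j => -z₂ j * v) * stdNormalPDF (v - β₀ - β₁ * z₁) =
        ∫ v : ℝ, G (fun j => -z₂ j * v) * stdNormalPDF (v - β₀ - β₁ * z₁)) :
    ∀ z₂ ∈ Z₂, ∀ᵐ v : ℝ ∂volume,
      F (fun j => -z₂ j * v) = G (fun j => -z₂ j * v) :=
  multinomial_identification_along_rays_general F G hFm hGm hFb hGb β₀ β₁ hβ₁ Z₂ Z₁ hZ₁ heq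
end
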